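/- Let Z be a deck with multiplicities 𝐦 = (m_1,…,m_n), and let 𝐬 be a set of j+1 ≤ m* distinct positions in {1,…,N}, where m* = max_i m_i (so P(Y_𝐬 = 1) > 0). Then there exists a coupling (Z, Z') of two random decks on a common probability space such that: Z is the uniformly random deck with multiplicities 𝐦; the law of Z' equals the law of Z conditioned on the event Y_𝐬 = 1 (in particular Z' takes a common value on the positions in 𝐬); and Z and Z' agree at all but at most 2j+2 positions almost surely. -/

import Mathlib

open Finset

/-- The set of decks (words) with `n` card types where type `i` appears exactly `m i` times. -/
def decks (n : ℕ) (m : Fin n → ℕ) : Finset (Fin (∑ i, m i) → Fin n) :=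
  Finset.univ.filter fun w => ∀ i, (Finset.univ.filter fun s => w s = i).card = m i

/-- Probability of an event under the uniformly random deck with multiplicities `m`. -/
noncomputable def pr (n : ℕ) (m : Fin n → ℕ)
    (E : (Fin (∑ i, m i) → Fin n) → Prop) : ℝ :=
  letI := Classical.decPred E
  (((decks n m).filter E).card : ℝ) / ((decks n m).card : ℝ)

/-- Expectation of a function of the uniformly random deck with multiplicities `m`. -/
noncomputable def expect (n : ℕ) (m : Fin n → ℕ)
    (f : (Fin (∑ i, m i) → Fin n) → ℝ) : ℝ :=
  (∑ w ∈ decks n m, f w) / ((decks n m).card : ℝ)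

/-- `T j w` : the last time `t` such that no card type appears more than `j` times
among the first `t` cards `w 0, …, w (t-1)`. -/
noncomputable def T {n N : ℕ} (j : ℕ) (w : Fin N → Fin n) : ℕ :=
  sSup {t | t ≤ N ∧ ∀ i : Fin n,
    (Finset.univ.filter fun s : Fin N => (s : ℕ) < t ∧ w s = i).card ≤ j}

/-- `W j t w` : the number of `(j+1)`-element sets of positions among the first `t`
positions on which `w` takes a common value. -/
def W {n N : ℕ} (j t : ℕ) (w : Fin N → Fin n) : ℕ :=
  ((Finset.univ.powersetCard (j + 1)).filter fun S : Finset (Fin N) =>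
    (∀ s ∈ S, (s : ℕ) < t) ∧ ∃ i, ∀ s ∈ S, w s = i).card

/-- `beta n m j = (1/n) ∑ᵢ C(mᵢ, j) / m^j` where `m = N/n` is the average multiplicity. -/
noncomputable def beta (n : ℕ) (m : Fin n → ℕ) (j : ℕ) : ℝ :=
  (1 / (n : ℝ)) * ∑ i, ((m i).choose j : ℝ) / (((∑ k, m k : ℕ) : ℝ) / (n : ℝ)) ^ j

/-- The number of correct guesses of the strategy `g` on the deck `w`, the cards being
revealed in order `w 0, w 1, …`; before the `t`-th card is revealed the guesser sees the
list of previously revealed cards. -/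
def score {n N : ℕ} (g : List (Fin n) → Fin n) (w : Fin N → Fin n) : ℕ :=
  (Finset.univ.filter fun t : Fin N => g ((List.ofFn w).take (t : ℕ)) = w t).card

/-- Expected number of correct guesses under the best strategy. -/
noncomputable def ESplus (n : ℕ) (m : Fin n → ℕ) : ℝ :=
  ⨆ g : List (Fin n) → Fin n, expect n m fun w => (score g w : ℝ)

/-- Expected number of correct guesses under the worst strategy. -/
noncomputable def ESminus (n : ℕ) (m : Fin n → ℕ) : ℝ :=
  ⨅ g : List (Fin n) → Fin n, expect n m fun w => (score g w : ℝ)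

/-- Harmonic number `H k = 1 + 1/2 + ⋯ + 1/k`. -/
noncomputable def harm (k : ℕ) : ℝ := ∑ i ∈ Finset.range k, (1 : ℝ) / (i + 1)


namespace CouplingAux

variable {N j : ℕ} (s : Finset (Fin N)) (hs : s.card = j + 1) (q : Fin (j + 1) ↪ Fin N)

noncomputable def pmap (k : Fin (j + 1)) : Fin N := (s.orderIsoOfFin hs k : Fin N)

lemma pmap_mem (k : Fin (j + 1)) : pmap s hs k ∈ s := (s.orderIsoOfFin hs k).2

lemma pmap_surj {x : Fin N} (hx : x ∈ s) : ∃ k, pmap s hs k = x :=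
  ⟨(s.orderIsoOfFin hs).symm ⟨x, hx⟩, by simp [pmap]⟩

include hs in
lemma card_sdiff_eq : (s \ univ.map q).card = (univ.map q \ s).card :=
  Finset.card_sdiff_comm (by simp [hs])

noncomputable def fpi (x : Fin N) : Fin N :=
  if hx : x ∈ s then q ((s.orderIsoOfFin hs).symm ⟨x, hx⟩)
  else if hx2 : x ∈ univ.map q \ s then
    (((s \ univ.map q).orderIsoOfFin (card_sdiff_eq s hs q)
      (((univ.map q \ s).orderIsoOfFin rfl).symm ⟨x, hx2⟩) : Fin N))
  else x

lemma fpi_of_mem {x : Fin N} (hx : x ∈ s) :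
    fpi s hs q x = q ((s.orderIsoOfFin hs).symm ⟨x, hx⟩) := dif_pos hx

lemma fpi_of_memA {x : Fin N} (hx : x ∈ univ.map q \ s) :
    fpi s hs q x = (((s \ univ.map q).orderIsoOfFin (card_sdiff_eq s hs q)
      (((univ.map q \ s).orderIsoOfFin rfl).symm ⟨x, hx⟩) : Fin N)) := by
  rw [fpi, dif_neg (mem_sdiff.mp hx).2, dif_pos hx]

lemma fpi_of_fix {x : Fin N} (hx1 : x ∉ s) (hx2 : x ∉ univ.map q \ s) :
    fpi s hs q x = x := by rw [fpi, dif_neg hx1, dif_neg hx2]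

lemma fpi_mem_q {x : Fin N} (hx : x ∈ s) : fpi s hs q x ∈ univ.map q := by
  rw [fpi_of_mem s hs q hx]; exact mem_map_of_mem _ (mem_univ _)

lemma fpi_mem_B {x : Fin N} (hx : x ∈ univ.map q \ s) :
    fpi s hs q x ∈ s \ univ.map q := by
  rw [fpi_of_memA s hs q hx]
  exact (((s \ univ.map q).orderIsoOfFin (card_sdiff_eq s hs q)) _).2

lemma fpi_injective : Function.Injective (fpi s hs q) := by
  intro x y hxy
  by_cases h1 : x ∈ s <;> by_cases h2 : y ∈ s
  · rw [fpi_of_mem s hs q h1, fpi_of_mem s hs q h2] at hxy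
    have := (s.orderIsoOfFin hs).symm.injective (q.injective hxy)
    exact congrArg Subtype.val this
  · by_cases h3 : y ∈ univ.map q \ s
    · exfalso
      have hm := fpi_mem_B s hs q h3
      rw [← hxy] at hm
      exact (mem_sdiff.mp hm).2 (fpi_mem_q s hs q h1)
    · rw [fpi_of_fix s hs q h2 h3] at hxy
      exfalso
      have := fpi_mem_q s hs q h1
      rw [hxy] at this
      exact h3 (mem_sdiff.mpr ⟨this, h2⟩)
  · by_cases h3 : x ∈ univ.map q \ s
    · exfalso
      have hm := fpi_mem_B s hs q h3
      rw [hxy] at hm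
      exact (mem_sdiff.mp hm).2 (fpi_mem_q s hs q h2)
    · rw [fpi_of_fix s hs q h1 h3] at hxy
      exfalso
      have := fpi_mem_q s hs q h2
      rw [← hxy] at this
      exact h3 (mem_sdiff.mpr ⟨this, h1⟩)
  · by_cases h3 : x ∈ univ.map q \ s <;> by_cases h4 : y ∈ univ.map q \ s
    · rw [fpi_of_memA s hs q h3, fpi_of_memA s hs q h4] at hxy
      have := ((s \ univ.map q).orderIsoOfFin (card_sdiff_eq s hs q)).injective
        (Subtype.ext hxy)
      have := ((univ.map q \ s).orderIsoOfFin rfl).symm.injective this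
      exact congrArg Subtype.val this
    · exfalso
      have hm := fpi_mem_B s hs q h3
      rw [hxy, fpi_of_fix s hs q h2 h4] at hm
      exact h2 (mem_sdiff.mp hm).1
    · exfalso
      have hm := fpi_mem_B s hs q h4
      rw [← hxy, fpi_of_fix s hs q h1 h3] at hm
      exact h1 (mem_sdiff.mp hm).1
    · rw [fpi_of_fix s hs q h1 h3, fpi_of_fix s hs q h2 h4] at hxy
      exact hxy

noncomputable def cpi : Equiv.Perm (Fin N) :=
  Equiv.ofBijective (fpi s hs q) (Finite.injective_iff_bijective.mp (fpi_injective s hs q))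

lemma cpi_apply (x : Fin N) : cpi s hs q x = fpi s hs q x := rfl

lemma cpi_pmap (k : Fin (j + 1)) : cpi s hs q (pmap s hs k) = q k := by
  rw [cpi_apply, fpi_of_mem s hs q (pmap_mem s hs k)]
  congr 1
  have : (⟨pmap s hs k, pmap_mem s hs k⟩ : {x // x ∈ s}) = s.orderIsoOfFin hs k := rfl
  rw [this, OrderIso.symm_apply_apply]

lemma cpi_symm_q (k : Fin (j + 1)) : (cpi s hs q).symm (q k) = pmap s hs k := by
  rw [← cpi_pmap s hs q k, Equiv.symm_apply_apply]

lemma cpi_fix {x : Fin N} (hx : cpi s hs q x ≠ x) : x ∈ s ∪ univ.map q := by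
  by_contra h
  rw [mem_union] at h
  push_neg at h
  exact hx (by rw [cpi_apply]; exact fpi_of_fix s hs q h.1 (fun hm => h.2 (mem_sdiff.mp hm).1))

end CouplingAux

namespace CouplingAux

variable {n : ℕ} {m : Fin n → ℕ}

lemma decks_comp_perm {w : Fin (∑ i, m i) → Fin n} (hw : w ∈ decks n m)
    (e : Equiv.Perm (Fin (∑ i, m i))) : w ∘ e ∈ decks n m := by
  simp only [decks, mem_filter, mem_univ, true_and] at hw ⊢
  intro i
  rw [← hw i]
  have : (univ.filter fun x => (w ∘ e) x = i)
      = (univ.filter fun x => w x = i).map e.symm.toEmbedding := by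
    ext y
    simp [Equiv.symm_apply_eq, eq_comm (a := y)]
  rw [this, card_map]

private def sigmaFstEquiv {β : Fin n → Type*} (i : Fin n) :
    {y : Σ k, β k // y.1 = i} ≃ β i where
  toFun y := y.2 ▸ y.1.2
  invFun z := ⟨⟨i, z⟩, rfl⟩
  left_inv := by rintro ⟨⟨k, z⟩, rfl⟩; rfl
  right_inv z := rfl

lemma decks_nonempty : (decks n m).Nonempty := by
  classical
  obtain ⟨e⟩ : Nonempty ((Σ i : Fin n, Fin (m i)) ≃ Fin (∑ i, m i)) :=
    ⟨Fintype.equivOfCardEq (by simp)⟩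
  refine ⟨fun x => (e.symm x).1, ?_⟩
  simp only [decks, mem_filter, mem_univ, true_and]
  intro i
  rw [← Fintype.card_subtype]
  rw [Fintype.card_congr ((e.symm.subtypeEquiv (fun x => Iff.rfl)).trans
    (sigmaFstEquiv (β := fun k => Fin (m k)) i))]
  simp

private def embFiberEquiv {α β : Type*} [DecidableEq β] (p : β → Prop) [DecidablePred p] :
    (α ↪ {x // p x}) ≃ {q : α ↪ β // ∀ k, p (q k)} where
  toFun e := ⟨e.trans (Function.Embedding.subtype _), fun k => (e k).2⟩
  invFun q := Function.Embedding.codRestrict _ q.1 q.2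
  left_inv e := by ext k; rfl
  right_inv q := by ext k; rfl

lemma good_count {j : ℕ} {w : Fin (∑ i, m i) → Fin n} (hw : w ∈ decks n m) :
    (univ.filter fun q : Fin (j + 1) ↪ Fin (∑ i, m i) => ∀ k, w (q k) = w (q 0)).card
      = ∑ i, (m i).descFactorial (j + 1) := by
  classical
  simp only [decks, mem_filter, mem_univ, true_and] at hw
  rw [Finset.card_eq_sum_card_fiberwise
    (f := fun q : Fin (j + 1) ↪ Fin (∑ i, m i) => w (q 0)) (t := univ) (fun x _ => mem_univ _)]
  refine Finset.sum_congr rfl fun i _ => ?_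
  rw [Finset.filter_filter]
  have hset : (univ.filter fun q : Fin (j + 1) ↪ Fin (∑ i, m i) =>
      (∀ k, w (q k) = w (q 0)) ∧ w (q 0) = i)
      = univ.filter fun q => ∀ k, w (q k) = i := by
    ext q
    simp only [mem_filter, mem_univ, true_and]
    constructor
    · rintro ⟨h1, h2⟩ k; rw [h1 k, h2]
    · intro h; exact ⟨fun k => by rw [h k, h 0], h 0⟩
  rw [hset, ← Fintype.card_subtype]
  rw [Fintype.card_congr (embFiberEquiv (α := Fin (j+1)) (fun x => w x = i)).symm]
  rw [Fintype.card_embedding_eq, Fintype.card_fin, Fintype.card_subtype, hw i]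

end CouplingAux

set_option maxHeartbeats 2000000 in
/-- Existence of the coupling of `Z` with `Z` conditioned on `Y_𝐬 = 1`.
For a set `s` of `j+1 ≤ m*` positions there is a coupling `μ` of a uniformly random deck
`Z` with a deck `Z'` distributed as `Z` conditioned on all cards at positions of `s` having
the same type, such that `Z'` takes a common value on `s` and `Z, Z'` differ in at most
`2j+2` positions, almost surely.  The coupling is expressed as a probability mass function
on pairs of words with the prescribed marginals. -/
theorem coupling_conditioned_deck (n : ℕ) (m : Fin n → ℕ) (j : ℕ)
    (hj : j + 1 ≤ Finset.univ.sup m)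
    (s : Finset (Fin (∑ i, m i))) (hs : s.card = j + 1) :
    ∃ μ : ((Fin (∑ i, m i) → Fin n) × (Fin (∑ i, m i) → Fin n)) → ℝ,
      (∀ z, 0 ≤ μ z) ∧
      (∑ z, μ z) = 1 ∧
      (∀ w, (∑ w', μ (w, w')) =
        (if w ∈ decks n m then (1 : ℝ) else 0) / ((decks n m).card : ℝ)) ∧
      (∀ w', (∑ w, μ (w, w')) =
        (if w' ∈ (decks n m).filter (fun v => ∃ i, ∀ p ∈ s, v p = i) then (1 : ℝ) else 0) /
          (((decks n m).filter (fun v => ∃ i, ∀ p ∈ s, v p = i)).card : ℝ)) ∧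
      (∀ w w', μ (w, w') ≠ 0 →
        (∃ i, ∀ p ∈ s, w' p = i) ∧
        (Finset.univ.filter fun p => w p ≠ w' p).card ≤ 2 * j + 2) := by
  classical
  -- abbreviations
  set C : Finset (Fin (∑ i, m i) → Fin n) :=
    (decks n m).filter (fun v => ∃ i, ∀ p ∈ s, v p = i) with hCdef
  set M : ℕ := ∑ i, (m i).descFactorial (j + 1) with hMdef
  set A : ℕ := Fintype.card (Fin (j + 1) ↪ Fin (∑ i, m i)) with hAdef
  let π : (Fin (j + 1) ↪ Fin (∑ i, m i)) → Equiv.Perm (Fin (∑ i, m i)) :=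
    fun q => CouplingAux.cpi s hs q
  let good : (Fin (∑ i, m i) → Fin n) → (Fin (j + 1) ↪ Fin (∑ i, m i)) → Prop :=
    fun w q => ∀ k, w (q k) = w (q 0)
  let ν : ((Fin (∑ i, m i) → Fin n) × (Fin (∑ i, m i) → Fin n)) → ℕ := fun z =>
    if z.1 ∈ decks n m then
      (univ.filter fun q : Fin (j + 1) ↪ Fin (∑ i, m i) =>
        good z.1 q ∧ z.1 ∘ (π q) = z.2).card
    else 0
  -- basic positivity facts
  have hn0 : n ≠ 0 := by
    rintro rfl
    simp only [Finset.univ_eq_empty, Finset.sup_empty, Nat.bot_eq_zero] at hj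
    omega
  haveI : Nonempty (Fin n) := Fin.pos_iff_nonempty.mp (Nat.pos_of_ne_zero hn0)
  have huniv : (univ : Finset (Fin n)).Nonempty := Finset.univ_nonempty
  have hdf : ∀ a : ℕ, j + 1 ≤ a → 0 < a.descFactorial (j + 1) := fun a ha =>
    Nat.pos_of_ne_zero fun h => by
      have := Nat.descFactorial_eq_zero_iff_lt.mp h; omega
  obtain ⟨i₀, -, hi₀⟩ := Finset.exists_mem_eq_sup univ huniv m
  have hji₀ : j + 1 ≤ m i₀ := hi₀ ▸ hj
  have hMpos : 0 < M := by
    refine lt_of_lt_of_le ?_ (Finset.single_le_sum (f := fun i => (m i).descFactorial (j+1))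
      (fun _ _ => Nat.zero_le _) (mem_univ i₀))
    exact hdf _ hji₀
  have hNj : j + 1 ≤ ∑ i, m i :=
    le_trans hji₀ (Finset.single_le_sum (fun _ _ => Nat.zero_le _) (mem_univ i₀))
  have hApos : 0 < A := by
    rw [hAdef, Fintype.card_embedding_eq, Fintype.card_fin, Fintype.card_fin]
    exact hdf _ hNj
  have hDpos : 0 < (decks n m).card := card_pos.mpr CouplingAux.decks_nonempty
  -- row sums
  have row : ∀ w, (∑ w', ν (w, w')) = if w ∈ decks n m then M else 0 := by
    intro w
    by_cases hw : w ∈ decks n m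
    · simp only [ν, if_pos hw]
      have : ∀ w', (univ.filter fun q : Fin (j + 1) ↪ Fin (∑ i, m i) =>
          good w q ∧ w ∘ (π q) = w').card
          = ((univ.filter (good w)).filter fun q => w ∘ (π q) = w').card := by
        intro w'; rw [Finset.filter_filter]
      rw [Finset.sum_congr rfl fun w' _ => this w']
      rw [← Finset.card_eq_sum_card_fiberwise
        (f := fun q : Fin (j + 1) ↪ Fin (∑ i, m i) => w ∘ (π q)) (t := univ)
        (fun q _ => mem_univ _)]
      exact CouplingAux.good_count hw
    · simp [ν, hw]
  -- column sums
  have col : ∀ w', (∑ w, ν (w, w')) = if w' ∈ C then A else 0 := by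
    intro w'
    by_cases hw' : w' ∈ C
    · rw [if_pos hw']
      rw [hCdef, mem_filter] at hw'
      obtain ⟨hw'D, i0, hi0⟩ := hw'
      have hp : ∀ k : Fin (j + 1), w' (CouplingAux.pmap s hs k) = i0 :=
        fun k => hi0 _ (CouplingAux.pmap_mem s hs k)
      have hν : ∀ w, ν (w, w') = (univ.filter fun q : Fin (j + 1) ↪ Fin (∑ i, m i) =>
          w' ∘ (π q).symm = w).card := by
        intro w
        have hiff : ∀ q : Fin (j + 1) ↪ Fin (∑ i, m i),
            (good w q ∧ w ∘ (π q) = w') ↔ (w' ∘ (π q).symm = w) := by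
          intro q
          constructor
          · rintro ⟨-, hF⟩
            funext x
            have := congrFun hF ((π q).symm x)
            simpa using this.symm
          · intro hwdef
            constructor
            · intro k
              have h1 : w (q k) = w' ((π q).symm (q k)) := by rw [← hwdef]; rfl
              have h2 : w (q 0) = w' ((π q).symm (q 0)) := by rw [← hwdef]; rfl
              rw [h1, h2, CouplingAux.cpi_symm_q, CouplingAux.cpi_symm_q, hp, hp]
            · funext x
              have : w (π q x) = w' ((π q).symm (π q x)) := by rw [← hwdef]; rfl
              simpa using this
        by_cases hw : w ∈ decks n m
        · simp only [ν, if_pos hw]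
          congr 1
          ext q
          simp only [mem_filter, mem_univ, true_and]
          exact hiff q
        · simp only [ν, if_neg hw]
          symm
          rw [Finset.card_eq_zero, Finset.filter_eq_empty_iff]
          intro q _ hq
          exact hw (hq ▸ CouplingAux.decks_comp_perm hw'D (π q).symm)
      rw [Finset.sum_congr rfl fun w _ => hν w]
      rw [← Finset.card_eq_sum_card_fiberwise
        (f := fun q : Fin (j + 1) ↪ Fin (∑ i, m i) => w' ∘ (π q).symm) (t := univ)
        (fun q _ => mem_univ _)]
      rw [Finset.card_univ]
    · rw [if_neg hw']
      apply Finset.sum_eq_zero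
      intro w _
      simp only [ν]
      split_ifs with hw
      · rw [Finset.card_eq_zero, Finset.filter_eq_empty_iff]
        rintro q -
        rintro ⟨hg, hF⟩
        apply hw'
        rw [hCdef, mem_filter]
        refine ⟨hF ▸ CouplingAux.decks_comp_perm hw (π q), w (q 0), fun x hx => ?_⟩
        obtain ⟨k, hk⟩ := CouplingAux.pmap_surj s hs hx
        have : w' x = w (π q x) := by rw [← hF]; rfl
        rw [this, ← hk, CouplingAux.cpi_pmap]
        exact hg k
      · rfl
  -- key double counting identity
  have key : (decks n m).card * M = C.card * A := by
    have h1 : (∑ w, ∑ w', ν (w, w')) = (decks n m).card * M := by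
      rw [Finset.sum_congr rfl fun w _ => row w]
      rw [Finset.sum_ite_mem, Finset.univ_inter, Finset.sum_const, smul_eq_mul]
    have h2 : (∑ w', ∑ w, ν (w, w')) = C.card * A := by
      rw [Finset.sum_congr rfl fun w' _ => col w']
      rw [Finset.sum_ite_mem, Finset.univ_inter, Finset.sum_const, smul_eq_mul]
    rw [← h1, ← h2, Finset.sum_comm]
  have hCpos : 0 < C.card := by
    rcases Nat.eq_zero_or_pos C.card with h | h
    · exfalso
      have := key
      rw [h, Nat.zero_mul] at this
      exact absurd this (Nat.mul_ne_zero hDpos.ne' hMpos.ne')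
    · exact h
  -- cast to reals
  have hMR : (M : ℝ) ≠ 0 := Nat.cast_ne_zero.mpr hMpos.ne'
  have hDR : ((decks n m).card : ℝ) ≠ 0 := Nat.cast_ne_zero.mpr hDpos.ne'
  have hAR : (A : ℝ) ≠ 0 := Nat.cast_ne_zero.mpr hApos.ne'
  have hCR : (C.card : ℝ) ≠ 0 := Nat.cast_ne_zero.mpr hCpos.ne'
  have keyR : ((decks n m).card : ℝ) * M = (C.card : ℝ) * A := by exact_mod_cast key
  refine ⟨fun z => (ν z : ℝ) / ((M : ℝ) * ((decks n m).card : ℝ)), ?_, ?_, ?_, ?_, ?_⟩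
  · intro z
    positivity
  · rw [Fintype.sum_prod_type]
    have : ∀ w, (∑ w', (ν (w, w') : ℝ) / ((M : ℝ) * ((decks n m).card : ℝ)))
        = (if w ∈ decks n m then (M : ℝ) else 0) / ((M : ℝ) * ((decks n m).card : ℝ)) := by
      intro w
      rw [← Finset.sum_div, ← Nat.cast_sum, row w]
      split_ifs <;> simp
    rw [Finset.sum_congr rfl fun w _ => this w]
    rw [← Finset.sum_div, Finset.sum_ite_mem, Finset.univ_inter, Finset.sum_const,
      nsmul_eq_mul]
    field_simp
  · intro w
    rw [← Finset.sum_div, ← Nat.cast_sum, row w]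
    split_ifs with hw
    · rw [div_eq_div_iff (by positivity) hDR]
      ring
    · simp
  · intro w'
    rw [← Finset.sum_div, ← Nat.cast_sum, col w']
    split_ifs with hw'
    · rw [div_eq_div_iff (by positivity) hCR]
      have : (A : ℝ) * C.card = M * (decks n m).card := by
        rw [mul_comm (A : ℝ), mul_comm (M : ℝ), keyR]
      rw [this]; ring
    · simp
  · intro w w' hμ
    have hν0 : ν (w, w') ≠ 0 := by
      intro h
      apply hμ
      show (ν (w, w') : ℝ) / ((M : ℝ) * ((decks n m).card : ℝ)) = 0
      rw [h]
      simp
    have hw : w ∈ decks n m := by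
      by_contra hw
      exact hν0 (by simp [ν, hw])
    have hne : (univ.filter fun q : Fin (j + 1) ↪ Fin (∑ i, m i) =>
        good w q ∧ w ∘ (π q) = w').Nonempty := by
      rw [← Finset.card_pos]
      apply Nat.pos_of_ne_zero
      intro h
      apply hν0
      simp only [ν, if_pos hw, h]
    obtain ⟨q, hq⟩ := hne
    rw [mem_filter] at hq
    obtain ⟨-, hg, hF⟩ := hq
    constructor
    · refine ⟨w (q 0), fun x hx => ?_⟩
      obtain ⟨k, hk⟩ := CouplingAux.pmap_surj s hs hx
      have : w' x = w (π q x) := by rw [← hF]; rfl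
      rw [this, ← hk, CouplingAux.cpi_pmap]
      exact hg k
    · have hsub : (univ.filter fun x => w x ≠ w' x) ⊆ s ∪ univ.map q := by
        intro x hx
        rw [mem_filter] at hx
        apply CouplingAux.cpi_fix s hs q
        intro hfix
        apply hx.2
        have : w' x = w (π q x) := by rw [← hF]; rfl
        rw [this, hfix]
      calc (univ.filter fun x => w x ≠ w' x).card
          ≤ (s ∪ univ.map q).card := Finset.card_le_card hsub
        _ ≤ s.card + (univ.map q).card := Finset.card_union_le _ _
        _ ≤ 2 * j + 2 := by rw [hs, Finset.card_map, Finset.card_univ, Fintype.card_fin]; omega
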